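/- Tops-count lemma: let v be an anonymous voting rule on m candidates that is pairwise responsive, pairwise isolated, and satisfies ε-strong unanimity. Then for every candidate x and every pair of profiles P⃗ = (P_1,...,P_n), P⃗' = (P'_1,...,P'_n) such that |{i : top(P_i) = x}| = |{i : top(P'_i) = x}|, we have |v(x,P⃗) − v(x,P⃗')| ≤ 2mε. -/

import Mathlib

open Finset

variable {C : Type*}

/-- A preference ordering on `C`: a ranking of the candidates, where a higher
rank means more preferred. -/
abbrev Pref (C : Type*) [Fintype C] := C ≃ Fin (Fintype.card C)

/-- `x` is strictly preferred to `y` in `P`. -/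
def PrefOver [Fintype C] (P : Pref C) (x y : C) : Prop := P y < P x

/-- The top (most preferred) candidate of `P`. -/
def topC [Fintype C] [Nonempty C] (P : Pref C) : C :=
  P.symm ⟨Fintype.card C - 1, Nat.sub_lt Fintype.card_pos Nat.one_pos⟩

/-- `x` is directly above `y` in `P`. -/
def DirAbove [Fintype C] (P : Pref C) (x y : C) : Prop := (P x : ℕ) = (P y : ℕ) + 1

/-- The ordering `P` with candidates `x` and `y` swapped. -/
def swapIn [Fintype C] [DecidableEq C] (P : Pref C) (x y : C) : Pref C :=
  (Equiv.swap x y).trans P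

/-- A (randomized) voting rule: nonnegative selection probabilities summing to 1. -/
def IsVotingRule [Fintype C] {n : ℕ} (v : (Fin n → Pref C) → C → ℝ) : Prop :=
  (∀ Pvec x, 0 ≤ v Pvec x) ∧ (∀ Pvec, ∑ x, v Pvec x = 1)

def Anonymous [Fintype C] {n : ℕ} (v : (Fin n → Pref C) → C → ℝ) : Prop :=
  ∀ (σ : Equiv.Perm (Fin n)) (Pvec : Fin n → Pref C) (x : C), v (Pvec ∘ σ) x = v Pvec x

/-- Expected utility of a distribution `d` over candidates under utility `u`. -/
def EU [Fintype C] (u : C → ℝ) (d : C → ℝ) : ℝ := ∑ x, u x * d x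

/-- A `[0,1]`-valued utility function consistent with the ordering `P`. -/
def Consistent [Fintype C] (u : C → ℝ) (P : Pref C) : Prop :=
  (∀ x, u x ∈ Set.Icc (0 : ℝ) 1) ∧ ∀ x y, u x > u y ↔ PrefOver P x y

/-- The random dictatorship voting rule. -/
noncomputable def vdict [Fintype C] [Nonempty C] [DecidableEq C] {n : ℕ}
    (Pvec : Fin n → Pref C) (x : C) : ℝ :=
  ((Finset.univ.filter (fun i => topC (Pvec i) = x)).card : ℝ) / n

def StrategyProofRule [Fintype C] {n : ℕ} (v : (Fin n → Pref C) → C → ℝ) : Prop :=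
  ∀ (i : Fin n) (Pvec : Fin n → Pref C) (P' : Pref C) (u : C → ℝ),
    Consistent u (Pvec i) → EU u (v (Function.update Pvec i P')) ≤ EU u (v Pvec)

def IsBelief [Fintype C] [DecidableEq C] (φ : Pref C → ℝ) : Prop :=
  (∀ P, 0 ≤ φ P) ∧ ∑ P, φ P = 1

/-- The profile where voter `i` submits `Pi` and the other voters submit `Q`. -/
def profileWith [Fintype C] {n : ℕ} (i : Fin n) (Q : {j : Fin n // j ≠ i} → Pref C)
    (Pi : Pref C) : Fin n → Pref C :=
  fun j => if h : j = i then Pi else Q ⟨j, h⟩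

/-- Expected utility for voter `i` reporting `Pi` when the others' orderings are
i.i.d. with distribution `φ`. -/
noncomputable def beliefEU [Fintype C] [DecidableEq C] {n : ℕ}
    (v : (Fin n → Pref C) → C → ℝ) (i : Fin n) (φ : Pref C → ℝ) (u : C → ℝ)
    (Pi : Pref C) : ℝ :=
  ∑ Q : {j : Fin n // j ≠ i} → Pref C, (∏ j, φ (Q j)) * EU u (v (profileWith i Q Pi))

/-- Strategy-proofness with respect to a single i.i.d. belief `φ`. -/
def SPwrtBelief [Fintype C] [DecidableEq C] {n : ℕ}
    (v : (Fin n → Pref C) → C → ℝ) (φ : Pref C → ℝ) : Prop :=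
  ∀ (i : Fin n) (Pi Pi' : Pref C) (u : C → ℝ),
    Consistent u Pi → beliefEU v i φ u Pi' ≤ beliefEU v i φ u Pi

/-- Weak strategy-proofness: strategy-proofness w.r.t. all i.i.d. beliefs. -/
def WeaklySP [Fintype C] [DecidableEq C] {n : ℕ}
    (v : (Fin n → Pref C) → C → ℝ) : Prop :=
  ∀ φ : Pref C → ℝ, IsBelief φ → SPwrtBelief v φ

def ParetoEff [Fintype C] {n : ℕ} (ε : ℝ) (v : (Fin n → Pref C) → C → ℝ) : Prop :=
  ∀ (x y : C) (Pvec : Fin n → Pref C), (∀ i, PrefOver (Pvec i) x y) → v Pvec y ≤ ε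

def StrongUnanimity [Fintype C] [Nonempty C] {n : ℕ} (ε : ℝ)
    (v : (Fin n → Pref C) → C → ℝ) : Prop :=
  ∀ (x : C) (Pvec : Fin n → Pref C), (∀ i, topC (Pvec i) = x) → 1 - ε ≤ v Pvec x

def WeakUnanimity [Fintype C] [Nonempty C] {n : ℕ} (ε : ℝ)
    (v : (Fin n → Pref C) → C → ℝ) : Prop :=
  ∀ P : Pref C, 1 - ε ≤ v (fun _ => P) (topC P)

def SuperWeakUnanimity [Fintype C] [Nonempty C] {n : ℕ} (ε : ℝ)
    (v : (Fin n → Pref C) → C → ℝ) : Prop :=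
  ∀ x : C, ∃ Pvec : Fin n → Pref C, (∀ i, topC (Pvec i) = x) ∧ 1 - ε ≤ v Pvec x

def PairwiseResponsive [Fintype C] [DecidableEq C] {n : ℕ}
    (v : (Fin n → Pref C) → C → ℝ) : Prop :=
  ∀ (Pvec : Fin n → Pref C) (i : Fin n) (x y z : C),
    DirAbove (Pvec i) x y → z ≠ x → z ≠ y →
      v (Function.update Pvec i (swapIn (Pvec i) x y)) z = v Pvec z

def PairwiseIsolated [Fintype C] [DecidableEq C] {n : ℕ}
    (v : (Fin n → Pref C) → C → ℝ) : Prop :=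
  ∀ (i : Fin n) (Pvec Pvec' : Fin n → Pref C) (x y : C),
    DirAbove (Pvec i) x y → Pvec' i = Pvec i →
    (∀ j, j ≠ i → (PrefOver (Pvec j) x y ↔ PrefOver (Pvec' j) x y)) →
    v (Function.update Pvec' i (swapIn (Pvec' i) x y)) y - v Pvec' y =
      v (Function.update Pvec i (swapIn (Pvec i) x y)) y - v Pvec y

/-- The ordering `e` with candidate `x` moved to the top (relative order of the
other candidates preserved). -/
def moveToTop [Fintype C] [DecidableEq C] (e : Pref C) (x : C) : Pref C :=
  e.trans ((Fin.revPerm.trans (Fin.cycleRange (e x).rev)).trans Fin.revPerm)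

/-- The ordering `e` with candidate `x` moved to the bottom (relative order of
the other candidates preserved). -/
def moveToBot [Fintype C] [DecidableEq C] (e : Pref C) (x : C) : Pref C :=
  e.trans (Fin.cycleRange (e x))

/-- The canonical profile `P⃗^{x,j}`: the first `j` voters rank `x` on top and
the remaining voters rank `x` on the bottom, with the other candidates ordered
according to the fixed ordering `e`. -/
def canonProfile [Fintype C] [DecidableEq C] {n : ℕ} (e : Pref C) (x : C) (j : ℕ) :
    Fin n → Pref C :=
  fun i => if (i : ℕ) < j then moveToTop e x else moveToBot e x

/-- `v'(x,j)`: the selection probability of `x` on the canonical profile with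
exactly `j` voters ranking `x` first. -/
def vTopCount [Fintype C] [DecidableEq C] {n : ℕ} (v : (Fin n → Pref C) → C → ℝ)
    (e : Pref C) (x : C) (j : ℕ) : ℝ :=
  v (canonProfile e x j) x


/-!
By pairwise responsiveness, the probability of `x` depends on a profile only through the sets of
candidates each voter ranks above `x`: adjacent swaps not involving `x` leave it unchanged.
Fix `w ≠ x` and grow these sets, one candidate at a time, in ballots that already rank `w` above
`x`. Pairwise isolation makes every step change the probability of `x` exactly as it does once
`w` has been added to every set; those profiles can be realized with `w` on top of every ballot,
where strong unanimity confines the probability of `x` to `[0, ε]`. So such a batch moves the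
probability of `x` by at most `ε`. Sending `x` to the bottom of every ballot not topped by `x`
takes `m - 1` batches (a ballot's witness being some candidate it ranks above `x`), and the
resulting profile is determined, up to a permutation of the voters, by the number of voters
ranking `x` first; anonymity then gives the bound `2 (m - 1) ε ≤ 2 m ε`.
-/

open Function

section Pref
variable [Fintype C]

def aboveSet (P : Pref C) (x : C) : Finset C := {c | P x < P c}

lemma mem_aboveSet {P : Pref C} {x c : C} : c ∈ aboveSet P x ↔ P x < P c := by
  simp [aboveSet]

lemma prefOver_iff_notMem_aboveSet {P : Pref C} {x z : C} (hzx : z ≠ x) :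
    PrefOver P x z ↔ z ∉ aboveSet P x := by
  rw [mem_aboveSet, not_lt, PrefOver, le_iff_lt_or_eq, or_iff_left (P.injective.ne hzx)]

lemma topC_eq_iff [Nonempty C] {P : Pref C} {c : C} : topC P = c ↔ ∀ z, P z ≤ P c := by
  rw [topC, Equiv.symm_apply_eq]
  constructor
  · rintro h z
    rw [← h, Fin.le_def]
    have := (P z).isLt
    dsimp only
    omega
  · intro h
    have hle := h (P.symm ⟨_, Nat.sub_lt Fintype.card_pos Nat.one_pos⟩)
    rw [Equiv.apply_symm_apply, Fin.le_def, Fin.val_mk] at hle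
    have := (P c).isLt
    ext
    rw [Fin.val_mk]
    omega

lemma aboveSet_eq_empty_iff [Nonempty C] {P : Pref C} {x : C} :
    aboveSet P x = ∅ ↔ topC P = x := by
  simp [Finset.eq_empty_iff_forall_notMem, mem_aboveSet, topC_eq_iff]

lemma dirAbove_iff_covBy {P : Pref C} {a b : C} : DirAbove P a b ↔ P b ⋖ P a := by
  rw [Fin.covBy_iff, Nat.covBy_iff_add_one_eq, DirAbove, eq_comm]

lemma dirAbove_of_lt {P : Pref C} {x z : C} (h : P z < P x)
    (hgap : ∀ d, P z < P d → P x ≤ P d) : DirAbove P x z :=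
  dirAbove_iff_covBy.mpr ⟨h, fun c hzc hcx =>
    (hgap (P.symm c) (by rwa [Equiv.apply_symm_apply])).not_gt (by rwa [Equiv.apply_symm_apply])⟩

lemma exists_dirAbove_lt_of_ne {P Q : Pref C} (h : P ≠ Q) :
    ∃ a b, DirAbove P a b ∧ Q a < Q b := by
  by_contra! hno
  have hmono : StrictMono (P.symm.trans Q) := strictMono_of_lt_succ fun i hi => by
    have hcov : DirAbove P (P.symm (Order.succ i)) (P.symm i) := by
      simpa [dirAbove_iff_covBy] using Order.covBy_succ_of_not_isMax hi
    refine (hno _ _ hcov).lt_of_ne fun he => ?_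
    exact (Order.lt_succ_of_not_isMax hi).ne (by simpa using he)
  exact h (Equiv.ext fun c => by simpa using (hmono.apply_eq (x := P c)).symm)

end Pref

section TierPref
variable [Fintype C]

noncomputable def tierKey (t : C → ℕ) (c : C) : ℕ ×ₗ Fin (Fintype.card C) :=
  toLex (t c, Fintype.equivFin C c)

lemma tierKey_injective (t : C → ℕ) : Injective (tierKey t) := fun _ _ h =>
  (Fintype.equivFin C).injective (Prod.ext_iff.mp (toLex.injective h)).2

noncomputable def tierPref (t : C → ℕ) : Pref C :=
  letI := LinearOrder.lift' _ (tierKey_injective t)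
  (Fintype.orderIsoFinOfCardEq C rfl).symm.toEquiv

lemma tierPref_lt_tierPref_iff {t : C → ℕ} {a b : C} :
    tierPref t a < tierPref t b ↔ tierKey t a < tierKey t b :=
  letI := LinearOrder.lift' _ (tierKey_injective t)
  (Fintype.orderIsoFinOfCardEq C rfl).symm.lt_iff_lt

lemma tierPref_lt_of_lt {t : C → ℕ} {a b : C} (h : t a < t b) : tierPref t a < tierPref t b :=
  tierPref_lt_tierPref_iff.mpr (Prod.Lex.toLex_lt_toLex.mpr (Or.inl h))

lemma le_of_tierPref_lt {t : C → ℕ} {a b : C} (h : tierPref t a < tierPref t b) :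
    t a ≤ t b := by
  rcases Prod.Lex.toLex_lt_toLex.mp (tierPref_lt_tierPref_iff.mp h) with h | h
  exacts [h.le, h.1.le]

lemma aboveSet_tierPref {t : C → ℕ} {x : C} (hx : ∀ c ≠ x, t c ≠ t x) :
    aboveSet (tierPref t) x = ({c | t x < t c} : Finset C) := by
  ext c
  rw [mem_aboveSet, mem_filter_univ]
  refine ⟨fun h => (le_of_tierPref_lt h).lt_of_ne fun he => ?_, tierPref_lt_of_lt⟩
  exact hx c (by rintro rfl; exact lt_irrefl _ h) he.symm

lemma topC_tierPref [Nonempty C] {t : C → ℕ} {w : C} (hw : ∀ c ≠ w, t c < t w) :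
    topC (tierPref t) = w :=
  topC_eq_iff.mpr fun c => by
    rcases eq_or_ne c w with rfl | hc
    exacts [le_rfl, (tierPref_lt_of_lt (hw c hc)).le]

lemma dirAbove_tierPref {t : C → ℕ} {x z : C} (hxz : t x = t z + 1)
    (hx : ∀ c ≠ x, t c ≠ t x) (hz : ∀ c ≠ z, t c ≠ t z) :
    DirAbove (tierPref t) x z := by
  refine dirAbove_of_lt (tierPref_lt_of_lt (by omega)) fun d hzd => ?_
  rcases eq_or_ne d x with rfl | hdx
  · exact le_rfl
  have hle := le_of_tierPref_lt hzd
  have hdx' := hx d hdx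
  have hdz : t d ≠ t z := hz d (by rintro rfl; exact lt_irrefl _ hzd)
  exact (tierPref_lt_of_lt (by omega : t x < t d)).le

end TierPref

section Swap
variable [Fintype C] [DecidableEq C]

lemma swapIn_apply (P : Pref C) (a b c : C) : swapIn P a b c = P (Equiv.swap a b c) := rfl

lemma swapIn_lt_swapIn_iff {P : Pref C} {a b c d : C} (hab : DirAbove P a b)
    (h₁ : ¬(c = a ∧ d = b)) (h₂ : ¬(c = b ∧ d = a)) :
    swapIn P a b c < swapIn P a b d ↔ P c < P d := by
  have hpos : ∀ u, (swapIn P a b u : ℕ) =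
      if (P u : ℕ) = P a then P b else if (P u : ℕ) = P b then P a else P u := by
    intro u
    simp only [swapIn_apply, Equiv.swap_apply_def, Fin.val_inj, P.injective.eq_iff]
    split_ifs <;> rfl
  simp only [← P.injective.eq_iff, ← Fin.val_inj] at h₁ h₂
  unfold DirAbove at hab
  rw [Fin.lt_def, Fin.lt_def, hpos, hpos]
  split_ifs <;> omega

lemma aboveSet_swapIn {P : Pref C} {a b x : C} (hab : DirAbove P a b) (ha : a ≠ x)
    (hb : b ≠ x) : aboveSet (swapIn P a b) x = aboveSet P x := by
  ext c
  simp only [mem_aboveSet]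
  exact swapIn_lt_swapIn_iff hab (fun h => ha h.1.symm) (fun h => hb h.1.symm)

lemma aboveSet_swapIn_self {P : Pref C} {x z : C} (h : DirAbove P x z) :
    aboveSet (swapIn P x z) x = insert z (aboveSet P x) := by
  have hcov := dirAbove_iff_covBy.mp h
  ext c
  rw [mem_insert, mem_aboveSet, mem_aboveSet, swapIn_apply, swapIn_apply, Equiv.swap_apply_left]
  by_cases hcz : c = z
  · simp [hcz, hcov.lt]
  by_cases hcx : c = x
  · subst hcx
    simp [hcz]
  rw [Equiv.swap_apply_of_ne_of_ne hcx hcz]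
  simp only [hcz, false_or]
  exact ⟨fun hc => (hcov.ge_of_gt hc).lt_of_ne (P.injective.ne hcx).symm,
    fun hc => hcov.lt.trans hc⟩

def inversions (P Q : Pref C) : Finset (C × C) := {p | Q p.1 < Q p.2 ∧ P p.2 < P p.1}

lemma inversions_swapIn_ssubset {P Q : Pref C} {a b : C} (hab : DirAbove P a b)
    (hq : Q a < Q b) : inversions (swapIn P a b) Q ⊂ inversions P Q := by
  have hba : P b < P a := (dirAbove_iff_covBy.mp hab).lt
  refine (Finset.ssubset_iff_of_subset ?_).mpr ⟨(a, b), ?_, ?_⟩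
  · rintro ⟨c, d⟩ h
    simp only [inversions, mem_filter_univ] at h ⊢
    refine ⟨h.1, (swapIn_lt_swapIn_iff hab ?_ ?_).mp h.2⟩
    · rintro ⟨rfl, rfl⟩
      exact lt_asymm h.1 hq
    · rintro ⟨rfl, rfl⟩
      simp [swapIn_apply, hba.not_gt] at h
  · simp [inversions, hq, hba]
  · rw [inversions, mem_filter_univ, swapIn_apply, swapIn_apply, Equiv.swap_apply_left,
      Equiv.swap_apply_right]
    exact fun h => hba.not_gt h.2

end Swap

section RowInvariance
variable [Fintype C] [DecidableEq C] {n : ℕ} {v : (Fin n → Pref C) → C → ℝ}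

/-- Bubble-sort `Pvec i` into `Q`; no adjacent swap on the way involves `x`, because both ballots
rank the same candidates above `x`. -/
lemma apply_update_eq_of_aboveSet_eq (hpr : PairwiseResponsive v) {Pvec : Fin n → Pref C}
    {i : Fin n} {Q : Pref C} {x : C} (h : aboveSet (Pvec i) x = aboveSet Q x) :
    v (update Pvec i Q) x = v Pvec x := by
  induction hN : #(inversions (Pvec i) Q) using Nat.strong_induction_on generalizing Pvec with
  | _ N ih =>
  by_cases hPQ : Pvec i = Q
  · rw [← hPQ, update_eq_self]
  obtain ⟨a, b, hab, hq⟩ := exists_dirAbove_lt_of_ne hPQ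
  have hba : Pvec i b < Pvec i a := (dirAbove_iff_covBy.mp hab).lt
  have hax : a ≠ x := by
    rintro rfl
    have : b ∉ aboveSet Q a := by rw [← h, mem_aboveSet]; exact hba.not_gt
    exact this (mem_aboveSet.mpr hq)
  have hbx : b ≠ x := by
    rintro rfl
    have : a ∈ aboveSet Q b := by rw [← h, mem_aboveSet]; exact hba
    exact (mem_aboveSet.mp this).not_gt hq
  have hsw := ih _ (hN ▸ card_lt_card (inversions_swapIn_ssubset hab hq))
    (Pvec := update Pvec i (swapIn (Pvec i) a b))
    (by rw [update_self, aboveSet_swapIn hab hax hbx, h]) (by rw [update_self])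
  rw [update_idem] at hsw
  rw [hsw, hpr Pvec i a b x hab hax.symm hbx.symm]

lemma apply_eq_of_aboveSet_eq (hpr : PairwiseResponsive v) {P Q : Fin n → Pref C} {x : C}
    (h : ∀ i, aboveSet (P i) x = aboveSet (Q i) x) : v P x = v Q x := by
  suffices ∀ s : Finset (Fin n), v (s.piecewise Q P) x = v P x by
    simpa using (this univ).symm
  intro s
  induction s using Finset.induction_on with
  | empty => rw [piecewise_empty]
  | insert j s hj ih =>
    rw [piecewise_insert, apply_update_eq_of_aboveSet_eq hpr, ih]
    rw [piecewise_eq_of_notMem _ _ _ hj, h]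

end RowInvariance

section RowPref
variable [Fintype C] [DecidableEq C]

def rowTier (x : C) (s : Finset C) (c : C) : ℕ := if c = x then 2 else if c ∈ s then 3 else 0

noncomputable def rowPref (x : C) (s : Finset C) : Pref C := tierPref (rowTier x s)

lemma aboveSet_rowPref (x : C) (s : Finset C) : aboveSet (rowPref x s) x = s.erase x := by
  rw [rowPref, aboveSet_tierPref fun c hc => by
    simp only [rowTier, hc, ↓reduceIte]; split_ifs <;> simp]
  ext c
  by_cases hc : c = x <;> by_cases hs : c ∈ s <;> simp [rowTier, hc, hs]

noncomputable def rowPrefTop (x w : C) (s : Finset C) : Pref C :=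
  tierPref (update (rowTier x (insert w s)) w 4)

lemma aboveSet_rowPrefTop {x w : C} (hwx : w ≠ x) (s : Finset C) :
    aboveSet (rowPrefTop x w s) x = (insert w s).erase x := by
  have hxw := hwx.symm
  rw [rowPrefTop, aboveSet_tierPref fun c hc => by
    simp only [update_apply, rowTier, hxw, hc]; split_ifs <;> simp_all]
  ext c
  by_cases hc : c = x <;> by_cases hw : c = w <;> by_cases hs : c ∈ s <;>
    simp_all [update_apply, rowTier]

lemma topC_rowPrefTop [Nonempty C] (x w : C) (s : Finset C) : topC (rowPrefTop x w s) = w :=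
  topC_tierPref fun c hc => by
    simp only [update_apply, rowTier, hc]; split_ifs <;> simp_all

noncomputable def rowPrefBelow (x z : C) (s : Finset C) : Pref C :=
  tierPref (update (rowTier x s) z 1)

lemma aboveSet_rowPrefBelow {x z : C} {s : Finset C} (hz : z ∉ s) (hzx : z ≠ x) :
    aboveSet (rowPrefBelow x z s) x = s.erase x := by
  have hxz := hzx.symm
  rw [rowPrefBelow, aboveSet_tierPref fun c hc => by
    simp only [update_apply, rowTier, hxz, hc]; split_ifs <;> simp_all]
  ext c
  by_cases hc : c = x <;> by_cases hcz : c = z <;> by_cases hs : c ∈ s <;>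
    simp_all [update_apply, rowTier]

lemma dirAbove_rowPrefBelow {x z : C} (s : Finset C) (hzx : z ≠ x) :
    DirAbove (rowPrefBelow x z s) x z := by
  have hxz := hzx.symm
  refine dirAbove_tierPref ?_ (fun c hc => ?_) (fun c hc => ?_) <;>
    simp only [update_apply, rowTier, hxz, if_true, if_false] <;> split_ifs <;> simp_all

end RowPref

section Isolation
variable [Fintype C] [DecidableEq C] {n : ℕ} {v : (Fin n → Pref C) → C → ℝ}

lemma IsVotingRule.add_le_one (hv : IsVotingRule v) (P : Fin n → Pref C) {a b : C}
    (hab : a ≠ b) : v P a + v P b ≤ 1 := by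
  rw [← hv.2 P, ← sum_pair hab]
  exact sum_le_sum_of_subset_of_nonneg (subset_univ _) fun c _ _ => hv.1 P c

/-- Only `x` and `z` change probability, and the total stays `1`. -/
lemma apply_update_swapIn_sub_eq_neg (hv : IsVotingRule v) (hpr : PairwiseResponsive v)
    {U : Fin n → Pref C} {i : Fin n} {x z : C} (h : DirAbove (U i) x z) :
    v (update U i (swapIn (U i) x z)) x - v U x =
      -(v (update U i (swapIn (U i) x z)) z - v U z) := by
  have hxz : x ≠ z := fun e => (dirAbove_iff_covBy.mp (e ▸ h)).lt.ne rfl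
  have hsum := Fintype.sum_eq_add x z hxz
    (f := fun c => v (update U i (swapIn (U i) x z)) c - v U c)
    fun c hc => sub_eq_zero.mpr (hpr U i x z c h hc.1 hc.2)
  rw [sum_sub_distrib, hv.2, hv.2, sub_self] at hsum
  linarith

lemma apply_update_swapIn_sub_eq (hv : IsVotingRule v) (hpr : PairwiseResponsive v)
    (hpi : PairwiseIsolated v) {R S : Fin n → Pref C} {i : Fin n} {x z : C} (hRS : R i = S i)
    (h : DirAbove (R i) x z)
    (hother : ∀ j, j ≠ i → (PrefOver (R j) x z ↔ PrefOver (S j) x z)) :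
    v (update R i (swapIn (R i) x z)) x - v R x =
      v (update S i (swapIn (S i) x z)) x - v S x := by
  rw [apply_update_swapIn_sub_eq_neg hv hpr h,
    apply_update_swapIn_sub_eq_neg hv hpr (hRS ▸ h), hpi i R S x z h hRS.symm hother]

lemma apply_update_congr (hpr : PairwiseResponsive v) (P : Fin n → Pref C) (i : Fin n)
    {Q₁ Q₂ : Pref C} {x : C} (h : aboveSet Q₁ x = aboveSet Q₂ x) :
    v (update P i Q₁) x = v (update P i Q₂) x := by
  simpa using apply_update_eq_of_aboveSet_eq hpr (Pvec := update P i Q₂) (i := i)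
    (by rw [update_self, h])

/-- Realize both sides with `x` directly above `z` in ballot `i`: the two profiles then differ
only in the other voters' positions of `w`, which leave their `x`-versus-`z` comparisons alone,
so pairwise isolation applies to the swap of `x` and `z`. -/
lemma apply_rowPref_insert_sub_eq (hv : IsVotingRule v) (hpr : PairwiseResponsive v)
    (hpi : PairwiseIsolated v) {x z w : C} {A : Fin n → Finset C} {i : Fin n}
    (hw : w ∈ A i) (hz : z ∉ A i) (hzx : z ≠ x) :
    v (rowPref x ∘ update A i (insert z (A i))) x - v (rowPref x ∘ A) x =
      v (rowPref x ∘ (insert w ∘ update A i (insert z (A i)))) x -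
        v (rowPref x ∘ (insert w ∘ A)) x := by
  set Q := rowPrefBelow x z (A i)
  have hQ : aboveSet Q x = (A i).erase x := aboveSet_rowPrefBelow hz hzx
  have hQw : aboveSet Q x = (insert w (A i)).erase x := by rw [insert_eq_of_mem hw, hQ]
  have hswap : aboveSet (swapIn Q x z) x = (insert z (A i)).erase x := by
    rw [aboveSet_swapIn_self (dirAbove_rowPrefBelow _ hzx), hQ, erase_insert_of_ne hzx]
  have hswapw : aboveSet (swapIn Q x z) x = (insert w (insert z (A i))).erase x := by
    rw [insert_comm, insert_eq_of_mem hw, hswap]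
  have hiso := apply_update_swapIn_sub_eq hv hpr hpi (i := i) (x := x) (z := z)
    (R := update (rowPref x ∘ A) i Q) (S := update (rowPref x ∘ (insert w ∘ A)) i Q) (by simp)
    (by simpa using dirAbove_rowPrefBelow (A i) hzx) fun j hj => by
      simp only [update_of_ne hj, comp_apply, prefOver_iff_notMem_aboveSet hzx, aboveSet_rowPref]
      simp [hzx, (ne_of_mem_of_not_mem hw hz).symm]
  simp only [update_self, update_idem] at hiso
  have hR : v (rowPref x ∘ A) x = v (update (rowPref x ∘ A) i Q) x :=
    (apply_update_eq_of_aboveSet_eq hpr (by rw [comp_apply, aboveSet_rowPref, hQ])).symm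
  have hS : v (rowPref x ∘ (insert w ∘ A)) x =
      v (update (rowPref x ∘ (insert w ∘ A)) i Q) x :=
    (apply_update_eq_of_aboveSet_eq hpr
      (by rw [comp_apply, comp_apply, aboveSet_rowPref, hQw])).symm
  have hR' : v (update (rowPref x ∘ A) i (rowPref x (insert z (A i)))) x =
      v (update (rowPref x ∘ A) i (swapIn Q x z)) x :=
    apply_update_congr hpr _ _ (by rw [aboveSet_rowPref, hswap])
  have hS' :
      v (update (rowPref x ∘ (insert w ∘ A)) i (rowPref x (insert w (insert z (A i))))) x =
      v (update (rowPref x ∘ (insert w ∘ A)) i (swapIn Q x z)) x :=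
    apply_update_congr hpr _ _ (by rw [aboveSet_rowPref, hswapw])
  rw [comp_update, comp_update, comp_update, hR, hS, hR', hS', hiso]

end Isolation

section Batches
variable [Fintype C] [DecidableEq C] {n : ℕ} {v : (Fin n → Pref C) → C → ℝ}

lemma apply_rowPref_sub_eq_of_le (hv : IsVotingRule v) (hpr : PairwiseResponsive v)
    (hpi : PairwiseIsolated v) {x w : C} {A B : Fin n → Finset C} (hAB : A ≤ B)
    (hxB : ∀ j, x ∉ B j) (hw : ∀ j, A j ≠ B j → w ∈ A j) :
    v (rowPref x ∘ B) x - v (rowPref x ∘ A) x =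
      v (rowPref x ∘ (insert w ∘ B)) x - v (rowPref x ∘ (insert w ∘ A)) x := by
  induction A using WellFoundedGT.induction with
  | _ A ih =>
  by_cases hAB' : A = B
  · rw [hAB', sub_self, sub_self]
  obtain ⟨i, hi⟩ := Function.ne_iff.mp hAB'
  obtain ⟨z, hzB, hzA⟩ := exists_of_ssubset ((hAB i).ssubset_of_ne hi)
  have hstep := apply_rowPref_insert_sub_eq hv hpr hpi (hw i hi) hzA
    (ne_of_mem_of_not_mem hzB (hxB i))
  have hrest := ih (update A i (insert z (A i)))
    (lt_update_self_iff.mpr (ssubset_insert hzA))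
    (update_le_iff.mpr ⟨insert_subset hzB (hAB i), fun j _ => hAB j⟩)
    fun j hj => by
      rcases eq_or_ne j i with rfl | hji
      · rw [update_self]
        exact mem_insert_of_mem (hw j hi)
      · rw [update_of_ne hji] at hj ⊢
        exact hw j hj
  rw [comp_update] at hstep hrest
  linarith

lemma apply_rowPref_insert_le [Nonempty C] (hv : IsVotingRule v) (hpr : PairwiseResponsive v)
    {ε : ℝ} (hsu : StrongUnanimity ε v) {x w : C} (hwx : w ≠ x) (M : Fin n → Finset C) :
    v (rowPref x ∘ (insert w ∘ M)) x ≤ ε := by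
  have hrow : v (rowPref x ∘ (insert w ∘ M)) x = v (fun j => rowPrefTop x w (M j)) x :=
    apply_eq_of_aboveSet_eq hpr fun j => by
      rw [comp_apply, comp_apply, aboveSet_rowPref, aboveSet_rowPrefTop hwx]
  have htop := hsu w _ fun j => topC_rowPrefTop x w (M j)
  have := hv.add_le_one (fun j => rowPrefTop x w (M j)) hwx
  linarith

lemma abs_apply_rowPref_sub_le [Nonempty C] (hv : IsVotingRule v) (hpr : PairwiseResponsive v)
    (hpi : PairwiseIsolated v) {ε : ℝ} (hsu : StrongUnanimity ε v) {x w : C}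
    (hwx : w ≠ x) {A B : Fin n → Finset C} (hAB : A ≤ B) (hxB : ∀ j, x ∉ B j)
    (hw : ∀ j, A j ≠ B j → w ∈ A j) :
    |v (rowPref x ∘ B) x - v (rowPref x ∘ A) x| ≤ ε := by
  rw [apply_rowPref_sub_eq_of_le hv hpr hpi hAB hxB hw, abs_le]
  have hA := apply_rowPref_insert_le hv hpr hsu hwx A
  have hB := apply_rowPref_insert_le hv hpr hsu hwx B
  have hA₀ := hv.1 (rowPref x ∘ (insert w ∘ A)) x
  have hB₀ := hv.1 (rowPref x ∘ (insert w ∘ B)) x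
  constructor <;> linarith

end Batches

lemma exists_perm_apply_iff_of_card_filter_eq {α : Type*} [Fintype α] {p q : α → Prop}
    [DecidablePred p] [DecidablePred q] (h : #{i | p i} = #{i | q i}) :
    ∃ σ : Equiv.Perm α, ∀ i, p (σ i) ↔ q i := by
  have hpos : Fintype.card {i // q i} = Fintype.card {i // p i} := by
    simpa only [Fintype.card_subtype] using h.symm
  have hneg : Fintype.card {i // ¬q i} = Fintype.card {i // ¬p i} := by
    rw [Fintype.card_subtype_compl, Fintype.card_subtype_compl, hpos]
  refine ⟨Equiv.subtypeCongr (Fintype.equivOfCardEq hpos) (Fintype.equivOfCardEq hneg),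
    fun i => ?_⟩
  by_cases hi : q i
  · simpa [Equiv.subtypeCongr, Equiv.sumCompl_symm_apply_of_pos hi, hi]
      using (Fintype.equivOfCardEq hpos ⟨i, hi⟩).2
  · simpa [Equiv.subtypeCongr, Equiv.sumCompl_symm_apply_of_neg hi, hi]
      using (Fintype.equivOfCardEq hneg ⟨i, hi⟩).2

section TopsProfile
variable [Fintype C] [DecidableEq C] {n : ℕ} {v : (Fin n → Pref C) → C → ℝ}

def bottomRows (x : C) (A : Fin n → Finset C) : Fin n → Finset C :=
  fun j => if (A j).Nonempty then univ.erase x else ∅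

/-- The rows after the batches of the candidates in `t`. -/
def movedRows (x : C) (A : Fin n → Finset C) (t : Finset C) : Fin n → Finset C :=
  fun j => if (A j ∩ t).Nonempty then univ.erase x else A j

lemma movedRows_empty (x : C) (A : Fin n → Finset C) : movedRows x A ∅ = A :=
  funext fun j => by simp [movedRows]

lemma movedRows_univ_erase {x : C} {A : Fin n → Finset C} (hA : ∀ j, A j ⊆ univ.erase x) :
    movedRows x A (univ.erase x) = bottomRows x A := funext fun j => by
  simp only [movedRows, bottomRows, inter_eq_left.mpr (hA j)]
  split_ifs with h
  · rfl
  · exact not_nonempty_iff_eq_empty.mp h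

variable [Nonempty C]

/-- The batch of `u`: the voters whose rows contain `u` but meet no earlier candidate. -/
lemma abs_apply_rowPref_movedRows_insert_sub_le (hv : IsVotingRule v)
    (hpr : PairwiseResponsive v) (hpi : PairwiseIsolated v) {ε : ℝ} (hsu : StrongUnanimity ε v)
    {x u : C} (hux : u ≠ x) {A : Fin n → Finset C} (hA : ∀ j, A j ⊆ univ.erase x)
    (t : Finset C) :
    |v (rowPref x ∘ movedRows x A (insert u t)) x - v (rowPref x ∘ movedRows x A t) x| ≤ ε := by
  have hmono : ∀ j, (A j ∩ t).Nonempty → (A j ∩ insert u t).Nonempty := fun j h =>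
    h.mono (inter_subset_inter_left (subset_insert u t))
  refine abs_apply_rowPref_sub_le hv hpr hpi hsu hux (fun j => ?_) (fun j => ?_) fun j hne => ?_
  · simp only [movedRows]
    split_ifs with h₁ h₂ h₂
    exacts [le_rfl, absurd (hmono j h₁) h₂, hA j, le_rfl]
  · simp only [movedRows]
    split_ifs
    exacts [notMem_erase x univ, fun hx => (mem_erase.mp (hA j hx)).1 rfl]
  · simp only [movedRows] at hne ⊢
    split_ifs at hne ⊢ with h₁ h₂ h₂
    · exact absurd rfl hne
    · exact absurd (hmono j h₁) h₂
    · obtain ⟨c, hc⟩ := h₂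
      rw [mem_inter, mem_insert] at hc
      rcases hc with ⟨hcA, rfl | hct⟩
      · exact hcA
      · exact absurd ⟨c, mem_inter.mpr ⟨hcA, hct⟩⟩ h₁
    · exact absurd rfl hne

lemma abs_apply_rowPref_sub_bottomRows_le (hv : IsVotingRule v) (hpr : PairwiseResponsive v)
    (hpi : PairwiseIsolated v) {ε : ℝ} (hsu : StrongUnanimity ε v) {x : C}
    {A : Fin n → Finset C} (hA : ∀ j, A j ⊆ univ.erase x) :
    |v (rowPref x ∘ A) x - v (rowPref x ∘ bottomRows x A) x| ≤ (Fintype.card C - 1) * ε := by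
  have hstage : ∀ t, x ∉ t →
      |v (rowPref x ∘ A) x - v (rowPref x ∘ movedRows x A t) x| ≤ #t * ε := by
    intro t
    induction t using Finset.induction_on with
    | empty => simp [movedRows_empty]
    | insert u t hu ih =>
      intro hx
      rw [mem_insert, not_or] at hx
      calc _ ≤ |v (rowPref x ∘ A) x - v (rowPref x ∘ movedRows x A t) x| +
            |v (rowPref x ∘ movedRows x A t) x - v (rowPref x ∘ movedRows x A (insert u t)) x| :=
            abs_sub_le _ _ _
        _ ≤ #t * ε + ε := add_le_add (ih hx.2) (by
            rw [abs_sub_comm]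
            exact abs_apply_rowPref_movedRows_insert_sub_le hv hpr hpi hsu (Ne.symm hx.1) hA t)
        _ = #(insert u t) * ε := by rw [card_insert_of_notMem hu]; push_cast; ring
  have := hstage (univ.erase x) (notMem_erase x univ)
  rwa [movedRows_univ_erase hA, card_erase_of_mem (mem_univ x), card_univ,
    Nat.cast_pred Fintype.card_pos] at this

lemma StrongUnanimity.nonneg {ε : ℝ} (hsu : StrongUnanimity ε v) (hv : IsVotingRule v) :
    0 ≤ ε := by
  obtain ⟨x⟩ := ‹Nonempty C›
  have h := hsu x (fun _ => rowPrefTop x x ∅) fun _ => topC_rowPrefTop x x ∅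
  have hle : v (fun _ => rowPrefTop x x ∅) x ≤ 1 := by
    rw [← hv.2 (fun _ => rowPrefTop x x ∅)]
    exact single_le_sum (fun c _ => hv.1 _ c) (mem_univ x)
  linarith

lemma abs_apply_sub_bottomRows_le (hv : IsVotingRule v) (hpr : PairwiseResponsive v)
    (hpi : PairwiseIsolated v) {ε : ℝ} (hsu : StrongUnanimity ε v) (x : C)
    (P : Fin n → Pref C) :
    |v P x - v (rowPref x ∘ bottomRows x fun j => aboveSet (P j) x) x| ≤
      (Fintype.card C - 1) * ε := by
  have hrow : v P x = v (rowPref x ∘ fun j => aboveSet (P j) x) x :=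
    apply_eq_of_aboveSet_eq hpr fun j => by
      rw [comp_apply, aboveSet_rowPref, erase_eq_of_notMem (by simp [mem_aboveSet])]
  rw [hrow]
  exact abs_apply_rowPref_sub_bottomRows_le hv hpr hpi hsu fun j c hc =>
    mem_erase.mpr ⟨fun hcx => (mem_aboveSet.mp (hcx ▸ hc)).false, mem_univ c⟩

lemma apply_rowPref_bottomRows_eq (han : Anonymous v) {x : C} {P P' : Fin n → Pref C}
    (h : #{i | topC (P i) = x} = #{i | topC (P' i) = x}) :
    v (rowPref x ∘ bottomRows x fun j => aboveSet (P j) x) x =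
      v (rowPref x ∘ bottomRows x fun j => aboveSet (P' j) x) x := by
  obtain ⟨σ, hσ⟩ := exists_perm_apply_iff_of_card_filter_eq h
  have : (rowPref x ∘ bottomRows x fun j => aboveSet (P' j) x) =
      (rowPref x ∘ bottomRows x fun j => aboveSet (P j) x) ∘ σ := funext fun i => by
    simp [bottomRows, nonempty_iff_ne_empty, aboveSet_eq_empty_iff, hσ i]
  rw [this, han]

end TopsProfile

/-- Tops-count lemma: the selection probability of `x` depends on
the number of voters ranking `x` first, up to 2mε. -/
theorem tops_count_lemma [Fintype C] [Nonempty C] [DecidableEq C] {n : ℕ}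
    (v : (Fin n → Pref C) → C → ℝ) (hv : IsVotingRule v) (han : Anonymous v)
    (hpr : PairwiseResponsive v) (hpi : PairwiseIsolated v) (ε : ℝ)
    (hsu : StrongUnanimity ε v) (x : C) (Pvec Pvec' : Fin n → Pref C)
    (hcount : (Finset.univ.filter fun i => topC (Pvec i) = x).card =
      (Finset.univ.filter fun i => topC (Pvec' i) = x).card) :
    |v Pvec x - v Pvec' x| ≤ 2 * (Fintype.card C : ℝ) * ε := by
  have h₁ := abs_apply_sub_bottomRows_le hv hpr hpi hsu x Pvec
  have h₂ := abs_apply_sub_bottomRows_le hv hpr hpi hsu x Pvec'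
  rw [apply_rowPref_bottomRows_eq han hcount] at h₁
  rw [abs_sub_comm] at h₂
  have hε := hsu.nonneg hv
  calc |v Pvec x - v Pvec' x| ≤ (Fintype.card C - 1) * ε + (Fintype.card C - 1) * ε :=
        (abs_sub_le _ _ _).trans (add_le_add h₁ h₂)
    _ ≤ 2 * (Fintype.card C : ℝ) * ε := by nlinarith
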